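/- arXiv:1505.06898 — 2 statements merged into one kernel-verified Lean document; each statement's English description precedes it below -/
import Mathlib

section
/- Let S be a sequence of characters on X and let N be a rooted phylogenetic network on X achieving the minimum hardwired parsimony score among all rooted phylogenetic networks on X. Then every rooted phylogenetic tree on X displayed by N achieves the minimum (ordinary) parsimony score among all rooted phylogenetic trees on X; moreover PS_hard(S,N) = PS(S,T) for each such displayed tree T. -/
open scoped Classical

structure Digraph' (V : Type) where
  edges : Finset (V × V)

namespace Digraph'

variable {V W X C : Type}

noncomputable def indeg (G : Digraph' V) (v : V) : ℕ :=
  (G.edges.filter fun e => e.2 = v).card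

noncomputable def outdeg (G : Digraph' V) (v : V) : ℕ :=
  (G.edges.filter fun e => e.1 = v).card

def Acyclic (G : Digraph' V) : Prop :=
  ∀ v : V, ¬ Relation.TransGen (fun a b => (a, b) ∈ G.edges) v v

/-- changing number: edges whose endpoints get different states -/
noncomputable def ch (G : Digraph' V) (f : V → C) : ℕ :=
  (G.edges.filter fun e => f e.1 ≠ f e.2).card

/-- `f` extends the character `χ` on the (distinguished) leaves -/
def Extends (leaf : X → V) (χ : X → C) (f : V → C) : Prop :=
  ∀ x, f (leaf x) = χ x

/-- hardwired parsimony score -/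
noncomputable def psHard (G : Digraph' V) (leaf : X → V) (χ : X → C) : ℕ :=
  sInf {n | ∃ f : V → C, Extends leaf χ f ∧ ch G f = n}

structure IsPhyloNetwork (G : Digraph' V) (root : V) (leaf : X → V) : Prop where
  acyclic : G.Acyclic
  leaf_inj : Function.Injective leaf
  reach : ∀ v : V, Relation.ReflTransGen (fun a b => (a, b) ∈ G.edges) root v
  leaf_iff : ∀ v : V, (∃ x, leaf x = v) ↔ G.indeg v = 1 ∧ G.outdeg v = 0
  root_out : 2 ≤ G.outdeg root
  root_in : G.indeg root = 0
  internal : ∀ v : V, v ≠ root → ¬(∃ x, leaf x = v) →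
      (G.indeg v = 1 ∧ 2 ≤ G.outdeg v) ∨ (2 ≤ G.indeg v ∧ G.outdeg v = 1)

def IsPhyloTree (G : Digraph' V) (root : V) (leaf : X → V) : Prop :=
  IsPhyloNetwork G root leaf ∧ ∀ v : V, G.indeg v ≤ 1

def IsBinaryPhyloTree (G : Digraph' V) (root : V) (leaf : X → V) : Prop :=
  IsPhyloTree G root leaf ∧ G.outdeg root = 2 ∧
    ∀ v : V, v ≠ root → ¬(∃ x, leaf x = v) → G.outdeg v = 2

def internalVerts (l : List V) : List V := (l.drop 1).dropLast

def pathEdges (l : List V) : List (V × V) := l.zip l.tail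

/-- `T` is displayed by `N`: an embedding of a subdivision of `T` into `N`,
    mapping leaves to leaves, tree edges to directed paths that are internally
    disjoint from each other and from the images of tree vertices. -/
def Displays (N : Digraph' V) (leafN : X → V) (T : Digraph' W) (leafT : X → W) : Prop :=
  ∃ φ : W → V, Function.Injective φ ∧ (∀ x, φ (leafT x) = leafN x) ∧
    ∃ P : W → W → List V, ∀ e ∈ T.edges,
      (P e.1 e.2).Chain' (fun a b => (a, b) ∈ N.edges) ∧
      (P e.1 e.2).head? = some (φ e.1) ∧
      (P e.1 e.2).getLast? = some (φ e.2) ∧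
      2 ≤ (P e.1 e.2).length ∧
      (P e.1 e.2).Nodup ∧
      (∀ w ∈ internalVerts (P e.1 e.2), w ∉ Set.range φ) ∧
      ∀ e' ∈ T.edges, e ≠ e' →
        (∀ w ∈ internalVerts (P e.1 e.2), w ∉ internalVerts (P e'.1 e'.2)) ∧
        ∀ p ∈ pathEdges (P e.1 e.2), p ∉ pathEdges (P e'.1 e'.2)

/-- softwired parsimony score of a single character -/
noncomputable def psSoft (N : Digraph' V) (leafN : X → V) (χ : X → C) : ℕ :=
  sInf {n | ∃ (W : Type) (T : Digraph' W) (rootT : W) (leafT : X → W),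
    IsPhyloTree T rootT leafT ∧ Displays N leafN T leafT ∧ psHard T leafT χ = n}

noncomputable def psHardSeq (G : Digraph' V) (leaf : X → V) {k : ℕ} (S : Fin k → X → C) : ℕ :=
  ∑ i, psHard G leaf (S i)

noncomputable def psSoftSeq (N : Digraph' V) (leafN : X → V) {k : ℕ} (S : Fin k → X → C) : ℕ :=
  ∑ i, psSoft N leafN (S i)

/-- a switching keeps all edges into non-reticulations and exactly one
    in-edge per reticulation -/
def IsSwitching (N T : Digraph' V) : Prop :=
  T.edges ⊆ N.edges ∧ (∀ e ∈ N.edges, N.indeg e.2 ≤ 1 → e ∈ T.edges) ∧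
    ∀ v : V, 2 ≤ N.indeg v → T.indeg v = 1

/-- number of negligible edges under `f` -/
noncomputable def negl (N : Digraph' V) (f : V → C) : ℕ :=
  (N.edges.filter fun e =>
    2 ≤ N.indeg e.2 ∧ f e.1 ≠ f e.2 ∧ ∃ p, (p, e.2) ∈ N.edges ∧ f p = f e.2).card

/-- isomorphism of leaf-labelled digraphs -/
def Iso {W' : Type} (T : Digraph' W) (leafT : X → W) (T' : Digraph' W') (leafT' : X → W') : Prop :=
  ∃ g : W ≃ W', (∀ u v : W, (u, v) ∈ T.edges ↔ (g u, g v) ∈ T'.edges) ∧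
    ∀ x, g (leafT x) = leafT' x

end Digraph'

open Digraph'

/-!
Composing an extension of a character on `N` with the embedding `φ` of `T` gives an extension on
`T` whose changing edges inject into those of the extension on `N`: a tree edge whose ends get
different states has a changing edge on its image path, and distinct tree edges have edge-disjoint
image paths. Hence `PS(S, T) ≤ PS_hard(S, N)`. Since `T` is itself a network, optimality of `N`
gives the reverse inequality, and optimality of `N` among all networks, in particular all trees,
passes to `T`.
-/

theorem List.exists_mem_zip_tail_rel_ne {α β : Type*} {R : α → α → Prop} (f : α → β) :
    ∀ {l : List α} {a b : α}, l.IsChain R → l.head? = some a → l.getLast? = some b →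
      f a ≠ f b → ∃ p ∈ l.zip l.tail, R p.1 p.2 ∧ f p.1 ≠ f p.2
  | [], _, _, _, ha, _, _ => by simp at ha
  | [_], _, _, _, ha, hb, hab => by simp_all
  | x :: y :: l, a, b, hc, ha, hb, hab => by
      obtain ⟨hxy, hc⟩ := List.isChain_cons_cons.mp hc
      obtain rfl : x = a := by simpa using ha
      by_cases hfxy : f x = f y
      · obtain ⟨p, hp, hRp⟩ :=
          exists_mem_zip_tail_rel_ne f hc rfl (by simpa using hb) (hfxy ▸ hab)
        exact ⟨p, List.mem_cons_of_mem _ hp, hRp⟩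
      · exact ⟨(x, y), List.mem_cons_self, hxy, hfxy⟩

namespace Digraph'

variable {V W X C : Type} {N : Digraph' V} {leafN : X → V} {T : Digraph' W} {leafT : X → W}

theorem exists_extends_ch_le_of_displays (hD : Displays N leafN T leafT) {χ : X → C}
    {f : V → C} (hf : Extends leafN χ f) : ∃ g : W → C, Extends leafT χ g ∧ T.ch g ≤ N.ch f := by
  obtain ⟨φ, -, hφleaf, P, hP⟩ := hD
  refine ⟨f ∘ φ, fun x => by simp [hφleaf x, hf x], ?_⟩
  refine Finset.card_le_card_of_forall_subsingleton (fun e p => p ∈ pathEdges (P e.1 e.2))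
    (fun e he => ?_) (fun p _ e he e' he' => ?_)
  · rw [Finset.mem_filter] at he
    obtain ⟨hchain, hhead, hlast, -⟩ := hP e he.1
    obtain ⟨p, hp, hpN, hpf⟩ := List.exists_mem_zip_tail_rel_ne f hchain hhead hlast he.2
    exact ⟨p, Finset.mem_filter.mpr ⟨hpN, hpf⟩, hp⟩
  · by_contra hne
    obtain ⟨-, -, -, -, -, -, hdisjoint⟩ := hP e (Finset.mem_filter.mp he.1).1
    exact (hdisjoint e' (Finset.mem_filter.mp he'.1).1 hne).2 p he.2 he'.2

theorem psHard_eq_zero_of_isEmpty [IsEmpty C] (G : Digraph' V) (leaf : X → V) (χ : X → C) :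
    psHard G leaf χ = 0 := by
  rw [psHard, Nat.sInf_eq_zero]
  cases isEmpty_or_nonempty V with
  | inl _ =>
    exact .inl ⟨isEmptyElim, fun x => isEmptyElim (χ x),
      by simp [ch, Finset.eq_empty_of_isEmpty G.edges]⟩
  | inr hV => exact .inr (Set.eq_empty_of_forall_notMem fun _ ⟨f, _⟩ => isEmptyElim (f hV.some))

theorem psHard_le_of_displays (hinj : Function.Injective leafN) (hD : Displays N leafN T leafT)
    (χ : X → C) : psHard T leafT χ ≤ psHard N leafN χ := by
  cases isEmpty_or_nonempty C with
  | inl _ => simp [psHard_eq_zero_of_isEmpty]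
  | inr _ =>
    obtain ⟨f, hf, hfN⟩ := Nat.sInf_mem (s := {n | ∃ f : V → C, Extends leafN χ f ∧ N.ch f = n})
      ⟨_, _, fun x => hinj.extend_apply χ (fun _ => Classical.arbitrary C) x, rfl⟩
    obtain ⟨g, hg, hgf⟩ := exists_extends_ch_le_of_displays hD hf
    calc psHard T leafT χ ≤ T.ch g := Nat.sInf_le ⟨g, hg, rfl⟩
      _ ≤ N.ch f := hgf
      _ = psHard N leafN χ := hfN

theorem psHardSeq_le_of_displays (hinj : Function.Injective leafN)
    (hD : Displays N leafN T leafT) {k : ℕ} (S : Fin k → X → C) :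
    psHardSeq T leafT S ≤ psHardSeq N leafN S :=
  Finset.sum_le_sum fun i _ => psHard_le_of_displays hinj hD (S i)

end Digraph'

/-- every tree displayed by a hardwired MP network is an MP tree,
    and realizes the score of the network. -/
theorem stmt4 {V W X C : Type} {k : ℕ} (S : Fin k → X → C)
    (N : Digraph' V) (rootN : V) (leafN : X → V) (hN : IsPhyloNetwork N rootN leafN)
    (hopt : ∀ (V' : Type) (N' : Digraph' V') (rootN' : V') (leafN' : X → V'),
      IsPhyloNetwork N' rootN' leafN' → psHardSeq N leafN S ≤ psHardSeq N' leafN' S)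
    (T : Digraph' W) (rootT : W) (leafT : X → W)
    (hT : IsPhyloTree T rootT leafT) (hD : Displays N leafN T leafT) :
    (∀ (W' : Type) (T' : Digraph' W') (rootT' : W') (leafT' : X → W'),
      IsPhyloTree T' rootT' leafT' → psHardSeq T leafT S ≤ psHardSeq T' leafT' S) ∧
    psHardSeq N leafN S = psHardSeq T leafT S := by
  have heq : psHardSeq N leafN S = psHardSeq T leafT S :=
    le_antisymm (hopt W T rootT leafT hT.1) (psHardSeq_le_of_displays hN.leaf_inj hD S)
  exact ⟨fun W' T' rootT' leafT' hT' => heq ▸ hopt W' T' rootT' leafT' hT'.1, heq⟩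
end

section
/- Let N be a hardwired maximum parsimony network for a sequence S = (χ₁,…,χ_k) of characters on X, and suppose N has a reticulation v. Let χ̄₁,…,χ̄_k be extensions of χ₁,…,χ_k to V(N) that collectively realize PS_hard(S,N). Then for every i and every parent p of v, χ̄ᵢ(p) = χ̄ᵢ(v). -/
open scoped Classical

open Digraph'

/-!
If a parent `p` of the reticulation `v` had `f i p ≠ f i v`, deleting the edge `(p, v)` would lower
`∑ i, ch N (f i)` by one. The remaining graph is no longer a phylogenetic network, but it can be
repaired without increasing the changing number of the lifted extensions: restricting to the
vertices that still reach a leaf removes dead ends and changes no in-degree, and every vertex with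
one child and at most one parent is then replaced by a gadget of two tree vertices and two
reticulations, all carrying the state of the replaced vertex. This yields a phylogenetic network
with a smaller hardwired score than `N`.

Suppressing those vertices instead would merge parallel edges (edges form a `Finset`), which
changes degrees elsewhere and forces an iterated clean-up; the gadget is a purely local repair.
-/

open Relation

theorem wellFounded_of_forall_not_transGen {α : Type*} [Finite α] {r : α → α → Prop}
    (h : ∀ a, ¬TransGen r a a) : WellFounded r := by
  have : IsTrans α (TransGen r) := ⟨fun _ _ _ => TransGen.trans⟩
  have : Std.Irrefl (TransGen r) := ⟨h⟩
  exact Subrelation.wf (fun h => TransGen.single h)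
    (Finite.wellFounded_of_trans_of_irrefl (TransGen r))

namespace Digraph'

variable {V W X C : Type}

section Basic

variable (G : Digraph' V)

theorem one_le_indeg_of_mem {a b : V} (h : (a, b) ∈ G.edges) : 1 ≤ G.indeg b :=
  Finset.card_pos.mpr ⟨(a, b), Finset.mem_filter.mpr ⟨h, rfl⟩⟩

theorem one_le_outdeg_of_mem {a b : V} (h : (a, b) ∈ G.edges) : 1 ≤ G.outdeg a :=
  Finset.card_pos.mpr ⟨(a, b), Finset.mem_filter.mpr ⟨h, rfl⟩⟩

theorem indeg_eq_card [Fintype V] (b : V) :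
    G.indeg b = (Finset.univ.filter fun a => (a, b) ∈ G.edges).card := by
  refine Finset.card_nbij' Prod.fst (fun a => (a, b)) ?_ ?_ ?_ ?_ <;>
    simp +contextual [Set.MapsTo, Set.LeftInvOn, Set.RightInvOn, Prod.ext_iff]
  rintro _ _ h rfl
  exact h

theorem outdeg_eq_card [Fintype V] (a : V) :
    G.outdeg a = (Finset.univ.filter fun b => (a, b) ∈ G.edges).card := by
  refine Finset.card_nbij' Prod.snd (fun b => (a, b)) ?_ ?_ ?_ ?_ <;>
    simp +contextual [Set.MapsTo, Set.LeftInvOn, Set.RightInvOn, Prod.ext_iff]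
  rintro _ _ h rfl
  exact h

theorem exists_mem_of_outdeg_ne_zero {a : V} (h : G.outdeg a ≠ 0) :
    ∃ b, (a, b) ∈ G.edges := by
  obtain ⟨e, he⟩ := Finset.card_ne_zero.mp h
  rw [Finset.mem_filter] at he
  exact ⟨e.2, he.2 ▸ he.1⟩

theorem exists_ne_mem_of_two_le_indeg {b : V} (h : 2 ≤ G.indeg b) (p : V) :
    ∃ a ≠ p, (a, b) ∈ G.edges := by
  obtain ⟨e, he, e', he', hne⟩ := Finset.one_lt_card.mp h
  simp only [Finset.mem_filter] at he he'
  by_cases hp : e.1 = p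
  · refine ⟨e'.1, fun h => hne (Prod.ext (hp.trans h.symm) (he.2.trans he'.2.symm)), ?_⟩
    exact he'.2 ▸ he'.1
  · exact ⟨e.1, hp, he.2 ▸ he.1⟩

theorem finite_of_reach {root : V}
    (h : ∀ v, ReflTransGen (fun a b => (a, b) ∈ G.edges) root v) : Finite V := by
  refine Set.finite_univ_iff.mp ((insert root (G.edges.image Prod.snd)).finite_toSet.subset ?_)
  intro v _
  rcases (h v).cases_tail with rfl | ⟨a, -, ha⟩
  · simp
  · simpa using Or.inr ⟨a, ha⟩

theorem Acyclic.wellFounded [Finite V] (h : G.Acyclic) :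
    WellFounded fun a b => (a, b) ∈ G.edges :=
  wellFounded_of_forall_not_transGen h

theorem Acyclic.exists_outdeg_eq_zero [Finite V] [Nonempty V] (h : G.Acyclic) :
    ∃ v, G.outdeg v = 0 := by
  have hwf : WellFounded fun a b => (b, a) ∈ G.edges :=
    wellFounded_of_forall_not_transGen fun v hv => h v (transGen_swap.mp hv)
  obtain ⟨v, -, hv⟩ := hwf.has_min Set.univ ⟨Classical.arbitrary V, trivial⟩
  refine ⟨v, by_contra fun hne => ?_⟩
  obtain ⟨w, hw⟩ := G.exists_mem_of_outdeg_ne_zero hne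
  exact hv w trivial hw

theorem Acyclic.reach_of_forall_exists_mem [Finite V] (hG : G.Acyclic) {root : V}
    (h : ∀ v ≠ root, ∃ u, (u, v) ∈ G.edges) (v : V) :
    ReflTransGen (fun a b => (a, b) ∈ G.edges) root v := by
  induction v using hG.wellFounded.induction with
  | _ v ih =>
    by_cases hv : v = root
    · exact hv ▸ ReflTransGen.refl
    · obtain ⟨u, hu⟩ := h v hv
      exact (ih u hu).tail hu

theorem indeg_le_of_subset {G' : Digraph' V} (h : G'.edges ⊆ G.edges) (v : V) :
    G'.indeg v ≤ G.indeg v :=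
  Finset.card_le_card (Finset.filter_subset_filter _ h)

theorem outdeg_le_of_subset {G' : Digraph' V} (h : G'.edges ⊆ G.edges) (v : V) :
    G'.outdeg v ≤ G.outdeg v :=
  Finset.card_le_card (Finset.filter_subset_filter _ h)

theorem indeg_erase_of_ne {e : V × V} {v : V} (h : e.2 ≠ v) :
    indeg ⟨G.edges.erase e⟩ v = G.indeg v := by
  simp only [indeg, Finset.filter_erase]
  exact congrArg Finset.card (Finset.erase_eq_of_notMem fun he => h (Finset.mem_filter.mp he).2)

theorem ch_erase_le (e : V × V) (g : V → C) : ch ⟨G.edges.erase e⟩ g ≤ ch G g := by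
  simp only [ch, Finset.filter_erase]
  exact Finset.card_erase_le

theorem ch_erase_lt {e : V × V} (he : e ∈ G.edges) {g : V → C} (hg : g e.1 ≠ g e.2) :
    ch ⟨G.edges.erase e⟩ g < ch G g := by
  simp only [ch, Finset.filter_erase]
  exact Finset.card_erase_lt_of_mem (Finset.mem_filter.mpr ⟨he, hg⟩)

theorem ch_comp_le {G' : Digraph' W} (π : W → V)
    (hmap : ∀ a b, (a, b) ∈ G'.edges → π a ≠ π b → (π a, π b) ∈ G.edges)
    (hinj : Set.InjOn (Prod.map π π) {e | e ∈ G'.edges ∧ π e.1 ≠ π e.2}) (g : V → C) :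
    ch G' (g ∘ π) ≤ ch G g := by
  refine Finset.card_le_card_of_injOn (Prod.map π π) ?_ (hinj.mono ?_)
  · rintro ⟨a, b⟩ h
    simp only [Finset.coe_filter, Set.mem_ofPred_eq, Function.comp_apply] at h
    exact Finset.mem_filter.mpr ⟨hmap a b h.1 (ne_of_apply_ne g h.2), h.2⟩
  · rintro ⟨a, b⟩ h
    simp only [Finset.coe_filter, Set.mem_ofPred_eq, Function.comp_apply] at h
    exact ⟨h.1, ne_of_apply_ne g h.2⟩

theorem psHard_le_ch {leaf : X → V} {χ : X → C} {g : V → C} (h : Extends leaf χ g) :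
    psHard G leaf χ ≤ ch G g :=
  Nat.sInf_le ⟨g, h, rfl⟩

end Basic

section OfRel

variable [Fintype V] {R : V → V → Prop}

noncomputable def ofRel (R : V → V → Prop) : Digraph' V :=
  ⟨Finset.univ.filter fun e => R e.1 e.2⟩

@[simp]
theorem mem_ofRel {a b : V} : (a, b) ∈ (ofRel R).edges ↔ R a b := by
  simp [ofRel]

theorem indeg_ofRel (b : V) : (ofRel R).indeg b = (Finset.univ.filter fun a => R a b).card := by
  simp [indeg_eq_card]

theorem outdeg_ofRel (a : V) : (ofRel R).outdeg a = (Finset.univ.filter fun b => R a b).card := by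
  simp [outdeg_eq_card]

end OfRel

-- What remains of a phylogenetic network after deleting reticulation edges: dead ends and
-- vertices with one parent and one child may occur.
structure IsPartialNetwork (G : Digraph' V) (root : V) (leaf : X → V) : Prop where
  acyclic : G.Acyclic
  leaf_inj : Function.Injective leaf
  reach : ∀ v, ReflTransGen (fun a b => (a, b) ∈ G.edges) root v
  indeg_leaf : ∀ x, G.indeg (leaf x) = 1
  outdeg_leaf : ∀ x, G.outdeg (leaf x) = 0
  indeg_root : G.indeg root = 0
  outdeg_le_one : ∀ v, 2 ≤ G.indeg v → G.outdeg v ≤ 1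

section PhyloNetwork

variable {G : Digraph' V} {root : V} {leaf : X → V}

theorem Acyclic.mono {G' : Digraph' V} (hG : G.Acyclic) (h : G'.edges ⊆ G.edges) : G'.Acyclic :=
  fun v hv => hG v (TransGen.mono (fun _ _ hab => h hab) _ _ hv)

theorem IsPhyloNetwork.isPartialNetwork (h : IsPhyloNetwork G root leaf) :
    IsPartialNetwork G root leaf where
  acyclic := h.acyclic
  leaf_inj := h.leaf_inj
  reach := h.reach
  indeg_leaf x := ((h.leaf_iff _).mp ⟨x, rfl⟩).1
  outdeg_leaf x := ((h.leaf_iff _).mp ⟨x, rfl⟩).2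
  indeg_root := h.root_in
  outdeg_le_one v hv := by
    by_cases hr : v = root
    · have := h.root_in
      subst hr
      omega
    by_cases hl : ∃ x, leaf x = v
    · have := (h.leaf_iff v).mp hl
      omega
    · rcases h.internal v hr hl with h' | h' <;> omega

theorem IsPhyloNetwork.nonempty_taxa (h : IsPhyloNetwork G root leaf) : Nonempty X := by
  have := G.finite_of_reach h.reach
  have : Nonempty V := ⟨root⟩
  obtain ⟨v, hv⟩ := h.acyclic.exists_outdeg_eq_zero
  by_cases hr : v = root
  · have := h.root_out
    subst hr
    omega
  by_cases hl : ∃ x, leaf x = v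
  · exact hl.nonempty
  · rcases h.internal v hr hl with h' | h' <;> omega

theorem IsPartialNetwork.leaf_ne_root (hG : IsPartialNetwork G root leaf) (x : X) :
    leaf x ≠ root := fun h => by
  have := hG.indeg_leaf x
  rw [h, hG.indeg_root] at this
  omega

theorem IsPartialNetwork.erase (hG : IsPartialNetwork G root leaf) {p v : V}
    (hv : 2 ≤ G.indeg v) : IsPartialNetwork ⟨G.edges.erase (p, v)⟩ root leaf := by
  have hsub : (⟨G.edges.erase (p, v)⟩ : Digraph' V).edges ⊆ G.edges := Finset.erase_subset _ _
  refine ⟨hG.acyclic.mono hsub, hG.leaf_inj, ?_, fun x => ?_, fun x => ?_, ?_, fun u hu => ?_⟩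
  · have := G.finite_of_reach hG.reach
    refine Acyclic.reach_of_forall_exists_mem _ (hG.acyclic.mono hsub) fun u hu => ?_
    by_cases huv : u = v
    · obtain ⟨q, hqp, hq⟩ := G.exists_ne_mem_of_two_le_indeg hv p
      exact ⟨q, Finset.mem_erase.mpr ⟨fun h => hqp (congrArg Prod.fst h), huv ▸ hq⟩⟩
    · obtain ⟨q, -, hq⟩ := (hG.reach u).cases_tail.resolve_left hu
      exact ⟨q, Finset.mem_erase.mpr ⟨fun h => huv (congrArg Prod.snd h), hq⟩⟩
  · have := hG.indeg_leaf x
    rw [G.indeg_erase_of_ne fun h : v = leaf x => by rw [h] at hv; omega, this]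
  · exact Nat.le_zero.mp ((G.outdeg_le_of_subset hsub _).trans (hG.outdeg_leaf x).le)
  · exact Nat.le_zero.mp ((G.indeg_le_of_subset hsub _).trans hG.indeg_root.le)
  · exact (G.outdeg_le_of_subset hsub u).trans
      (hG.outdeg_le_one u (hu.trans (G.indeg_le_of_subset hsub u)))

end PhyloNetwork

section Induce

variable [Fintype V] (G : Digraph' V)

noncomputable def induce (s : Set V) : Digraph' s :=
  ofRel fun a b => (a.1, b.1) ∈ G.edges

theorem indeg_induce {s : Set V} (u : s) (h : ∀ a, (a, u.1) ∈ G.edges → a ∈ s) :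
    (G.induce s).indeg u = G.indeg u := by
  rw [induce, indeg_ofRel, indeg_eq_card]
  refine Finset.card_bij (fun a _ => a.1) ?_ (fun _ _ _ _ => Subtype.ext) ?_
  · intro a ha
    simpa using ha
  · intro a ha
    rw [Finset.mem_filter] at ha
    exact ⟨⟨a, h a ha.2⟩, by simpa using ha.2, rfl⟩

theorem outdeg_induce_le {s : Set V} (u : s) : (G.induce s).outdeg u ≤ G.outdeg u := by
  rw [induce, outdeg_ofRel, outdeg_eq_card]
  refine Finset.card_le_card_of_injOn Subtype.val (fun b hb => ?_) Subtype.val_injective.injOn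
  simpa using hb

theorem ch_induce_le (s : Set V) (g : V → C) : ch (G.induce s) (g ∘ Subtype.val) ≤ ch G g :=
  G.ch_comp_le _ (fun _ _ h _ => mem_ofRel.mp h)
    ((Subtype.val_injective.prodMap Subtype.val_injective).injOn) g

theorem Acyclic.induce {G : Digraph' V} (hG : G.Acyclic) (s : Set V) : (G.induce s).Acyclic :=
  fun u hu => hG u.1 (hu.lift Subtype.val fun _ _ h => mem_ofRel.mp h)

end Induce

section Prune

variable {G : Digraph' V} {root : V} {leaf : X → V}

def ReachesLeaf (G : Digraph' V) (leaf : X → V) (u : V) : Prop :=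
  ∃ x, ReflTransGen (fun a b => (a, b) ∈ G.edges) u (leaf x)

theorem ReachesLeaf.of_mem {a b : V} (hb : G.ReachesLeaf leaf b) (h : (a, b) ∈ G.edges) :
    G.ReachesLeaf leaf a :=
  hb.imp fun _ => ReflTransGen.head h

theorem IsPartialNetwork.reachesLeaf_root [Nonempty X] (hG : IsPartialNetwork G root leaf) :
    G.ReachesLeaf leaf root :=
  ⟨Classical.arbitrary X, hG.reach _⟩

theorem IsPartialNetwork.induce_reachesLeaf [Fintype V] [Nonempty X]
    (hG : IsPartialNetwork G root leaf) :
    IsPartialNetwork (G.induce {u | G.ReachesLeaf leaf u}) ⟨root, hG.reachesLeaf_root⟩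
      fun x => ⟨leaf x, x, .refl⟩ := by
  have hindeg (u : {u | G.ReachesLeaf leaf u}) := G.indeg_induce u fun _ h => u.2.of_mem h
  refine ⟨hG.acyclic.induce _, fun x y h => hG.leaf_inj (congrArg Subtype.val h), ?_,
    fun x => ?_, fun x => ?_, ?_, fun u hu => ?_⟩
  · refine Acyclic.reach_of_forall_exists_mem _ (hG.acyclic.induce _) fun u hu => ?_
    obtain ⟨q, -, hq⟩ := (hG.reach u.1).cases_tail.resolve_left fun h => hu (Subtype.ext h)
    exact ⟨⟨q, u.2.of_mem hq⟩, mem_ofRel.mpr hq⟩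
  · rw [hindeg, hG.indeg_leaf]
  · exact Nat.le_zero.mp ((G.outdeg_induce_le _).trans (hG.outdeg_leaf x).le)
  · rw [hindeg, hG.indeg_root]
  · rw [hindeg] at hu
    exact (G.outdeg_induce_le u).trans (hG.outdeg_le_one u hu)

theorem exists_eq_leaf_of_outdeg_induce_reachesLeaf [Fintype V] (u : {u | G.ReachesLeaf leaf u})
    (hu : (G.induce {u | G.ReachesLeaf leaf u}).outdeg u = 0) :
    ∃ x, (⟨leaf x, x, .refl⟩ : {u | G.ReachesLeaf leaf u}) = u := by
  obtain ⟨x, hx⟩ := u.2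
  rcases hx.cases_head with h | ⟨w, hw, hwx⟩
  · exact ⟨x, Subtype.ext h.symm⟩
  · have hedge : (u, ⟨w, x, hwx⟩) ∈ (G.induce {u | G.ReachesLeaf leaf u}).edges :=
      mem_ofRel.mpr hw
    have := one_le_outdeg_of_mem _ hedge
    omega

end Prune

section Expand

variable (G : Digraph' V)

def IsUnary (v : V) : Prop :=
  G.indeg v ≤ 1 ∧ G.outdeg v = 1

-- Replaces a unary vertex `a = (a, 0)`: `0` and `1` become tree vertices, `2` and `3`
-- reticulations, and `(a, 3)` takes over the edge from `a` to its child.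
def gadget : Finset (Fin 4 × Fin 4) :=
  {(0, 1), (0, 2), (1, 2), (1, 3), (2, 3)}

theorem gadget_lt : ∀ e ∈ gadget, e.1 < e.2 := by
  decide

theorem sub_one_mem_gadget : ∀ j : Fin 4, j ≠ 0 → (j - 1, j) ∈ gadget := by
  decide

noncomputable def gadgetExit (v : V) : Fin 4 :=
  if G.IsUnary v then 3 else 0

abbrev ExpandedVertex : Type :=
  {x : V × Fin 4 // x.2 = 0 ∨ G.IsUnary x.1}

def baseVertex (v : V) : G.ExpandedVertex :=
  ⟨(v, 0), Or.inl rfl⟩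

noncomputable def exitVertex (v : V) : G.ExpandedVertex :=
  ⟨(v, G.gadgetExit v), by unfold gadgetExit; split_ifs with h <;> simp [h]⟩

noncomputable def expandUnary [Fintype V] : Digraph' G.ExpandedVertex :=
  ofRel fun x y => ((x.1.1, y.1.1) ∈ G.edges ∧ x.1.2 = G.gadgetExit x.1.1 ∧ y.1.2 = 0) ∨
    (x.1.1 = y.1.1 ∧ (x.1.2, y.1.2) ∈ gadget)

theorem gadget_snd_ne_zero : ∀ e ∈ gadget, e.2 ≠ 0 := by
  decide

theorem gadget_fst_ne_three : ∀ e ∈ gadget, e.1 ≠ 3 := by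
  decide

@[simp]
theorem baseVertex_val (v : V) : (G.baseVertex v).1 = (v, 0) :=
  rfl

@[simp]
theorem exitVertex_val (v : V) : (G.exitVertex v).1 = (v, G.gadgetExit v) :=
  rfl

theorem gadgetExit_of_isUnary {v : V} (h : G.IsUnary v) : G.gadgetExit v = 3 :=
  if_pos h

theorem gadgetExit_of_not_isUnary {v : V} (h : ¬G.IsUnary v) : G.gadgetExit v = 0 :=
  if_neg h

theorem baseVertex_eq_exitVertex {v : V} (h : ¬G.IsUnary v) : G.baseVertex v = G.exitVertex v :=
  Subtype.ext (Prod.ext rfl (G.gadgetExit_of_not_isUnary h).symm)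

theorem expandedVertex_cases (y : G.ExpandedVertex) :
    (∃ a, y = G.baseVertex a) ∨
      ∃ a i, ∃ hu : G.IsUnary a, i ≠ 0 ∧ y = ⟨(a, i), Or.inr hu⟩ := by
  obtain ⟨⟨a, i⟩, hai⟩ := y
  by_cases hi : i = 0
  · exact Or.inl ⟨a, Subtype.ext (Prod.ext rfl hi)⟩
  · exact Or.inr ⟨a, i, hai.resolve_left hi, hi, rfl⟩

variable [Fintype V]

theorem indeg_expandUnary_baseVertex (a : V) :
    G.expandUnary.indeg (G.baseVertex a) = G.indeg a := by
  rw [expandUnary, indeg_ofRel, indeg_eq_card]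
  refine Finset.card_nbij' (fun x => x.1.1) G.exitVertex ?_ ?_ ?_ ?_
  all_goals intro x hx
  all_goals simp only [Finset.coe_filter, Finset.mem_univ, true_and, Set.mem_ofPred_eq,
    baseVertex_val, exitVertex_val, and_true] at hx ⊢
  · exact hx.elim (·.1) fun h => (gadget_snd_ne_zero _ h.2 rfl).elim
  · exact Or.inl hx
  · obtain ⟨-, hx⟩ | ⟨-, h⟩ := hx
    · exact Subtype.ext (Prod.ext rfl hx.symm)
    · exact (gadget_snd_ne_zero _ h rfl).elim

theorem outdeg_expandUnary_exitVertex (a : V) :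
    G.expandUnary.outdeg (G.exitVertex a) = G.outdeg a := by
  rw [expandUnary, outdeg_ofRel, outdeg_eq_card]
  have hgad : ∀ y : G.ExpandedVertex, y.1.1 = a → (G.gadgetExit a, y.1.2) ∉ gadget := by
    rintro ⟨⟨b, j⟩, hj⟩ rfl hmem
    simp only at hj hmem
    unfold gadgetExit at hmem
    split_ifs at hmem with hu
    · exact gadget_fst_ne_three _ hmem rfl
    · rcases hj with rfl | hj
      exacts [gadget_snd_ne_zero _ hmem rfl, hu hj]
  refine Finset.card_nbij' (fun y => y.1.1) G.baseVertex ?_ ?_ ?_ ?_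
  all_goals intro y hy
  all_goals simp only [Finset.coe_filter, Finset.mem_univ, true_and, Set.mem_ofPred_eq,
    baseVertex_val, exitVertex_val, and_true] at hy ⊢
  · exact hy.elim (·.1) fun h => absurd h.2 (hgad y h.1.symm)
  · exact Or.inl hy
  · obtain ⟨-, hy⟩ | ⟨h, hg⟩ := hy
    · exact Subtype.ext (Prod.ext rfl hy.symm)
    · exact absurd hg (hgad y h.symm)

theorem indeg_expandUnary_of_ne_zero {a : V} (hu : G.IsUnary a) {j : Fin 4} (hj : j ≠ 0) :
    G.expandUnary.indeg ⟨(a, j), Or.inr hu⟩ =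
      (Finset.univ.filter fun i => (i, j) ∈ gadget).card := by
  rw [expandUnary, indeg_ofRel]
  refine Finset.card_nbij' (fun x => x.1.2) (fun i => ⟨(a, i), Or.inr hu⟩) ?_ ?_ ?_ ?_
  all_goals intro x hx
  all_goals simp only [Finset.coe_filter, Finset.mem_univ, true_and, Set.mem_ofPred_eq] at hx ⊢
  · exact hx.elim (fun h => absurd h.2.2 hj) (·.2)
  · exact Or.inr hx
  · obtain h | ⟨h, -⟩ := hx
    · exact absurd h.2.2 hj
    · exact Subtype.ext (Prod.ext h.symm rfl)

theorem outdeg_expandUnary_of_ne_three {a : V} (hu : G.IsUnary a) {i : Fin 4} (hi : i ≠ 3) :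
    G.expandUnary.outdeg ⟨(a, i), Or.inr hu⟩ =
      (Finset.univ.filter fun j => (i, j) ∈ gadget).card := by
  rw [expandUnary, outdeg_ofRel]
  have hexit : i ≠ G.gadgetExit a := G.gadgetExit_of_isUnary hu ▸ hi
  refine Finset.card_nbij' (fun y => y.1.2) (fun j => ⟨(a, j), Or.inr hu⟩) ?_ ?_ ?_ ?_
  all_goals intro y hy
  all_goals simp only [Finset.coe_filter, Finset.mem_univ, true_and, Set.mem_ofPred_eq] at hy ⊢
  · exact hy.elim (fun h => absurd h.2.1 hexit) (·.2)
  · exact Or.inr hy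
  · obtain h | ⟨h, -⟩ := hy
    · exact absurd h.2.1 hexit
    · exact Subtype.ext (Prod.ext h rfl)

theorem Acyclic.expandUnary (hG : G.Acyclic) : G.expandUnary.Acyclic := by
  have hwf := WellFounded.prod_lex hG.wellFounded (wellFounded_lt (α := Fin 4))
  refine fun x hx =>
    hwf.transGen.irrefl.irrefl x.1 (TransGen.lift Subtype.val (fun y z h => ?_) x x hx)
  rcases mem_ofRel.mp h with ⟨hyz, -⟩ | ⟨hyz, hij⟩
  · exact Prod.lex_def.mpr (Or.inl hyz)
  · exact Prod.lex_def.mpr (Or.inr ⟨hyz, gadget_lt _ hij⟩)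

theorem ch_expandUnary_le (g : V → C) :
    ch G.expandUnary (g ∘ fun x => x.1.1) ≤ ch G g := by
  refine G.ch_comp_le _ (fun x y h hne => ?_) ?_ g
  · exact (mem_ofRel.mp h).resolve_right (fun h' => hne h'.1) |>.1
  · rintro ⟨x, y⟩ ⟨hxy, hne⟩ ⟨x', y'⟩ ⟨hxy', hne'⟩ heq
    obtain ⟨hx, hy⟩ := Prod.ext_iff.mp heq
    obtain ⟨-, hx2, hy2⟩ := (mem_ofRel.mp hxy).resolve_right fun h' => hne h'.1
    obtain ⟨-, hx2', hy2'⟩ := (mem_ofRel.mp hxy').resolve_right fun h' => hne' h'.1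
    simp only [Prod.map_fst, Prod.map_snd] at hx hy
    refine Prod.ext (Subtype.ext (Prod.ext hx ?_)) (Subtype.ext (Prod.ext hy (hy2.trans hy2'.symm)))
    rw [hx2, hx2', hx]

end Expand

section ExpandNetwork

variable {G : Digraph' V} {root : V} {leaf : X → V}

theorem IsPartialNetwork.not_isUnary_leaf (hG : IsPartialNetwork G root leaf) (x : X) :
    ¬G.IsUnary (leaf x) := fun h => by
  have := hG.outdeg_leaf x
  have := h.2
  omega

variable [Fintype V]

theorem outdeg_expandUnary_baseVertex_of_isUnary {v : V} (h : G.IsUnary v) :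
    G.expandUnary.outdeg (G.baseVertex v) = 2 :=
  (G.outdeg_expandUnary_of_ne_three h (by decide)).trans (by decide)

theorem outdeg_expandUnary_baseVertex_of_not_isUnary {v : V} (h : ¬G.IsUnary v) :
    G.expandUnary.outdeg (G.baseVertex v) = G.outdeg v := by
  rw [G.baseVertex_eq_exitVertex h, outdeg_expandUnary_exitVertex]

theorem expandUnary_degrees_of_ne_zero {a : V} (hu : G.IsUnary a) {i : Fin 4} (hi : i ≠ 0) :
    let x : G.ExpandedVertex := ⟨(a, i), Or.inr hu⟩
    (G.expandUnary.indeg x = 1 ∧ 2 ≤ G.expandUnary.outdeg x) ∨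
      (2 ≤ G.expandUnary.indeg x ∧ G.expandUnary.outdeg x = 1) := by
  intro x
  have hout3 : G.expandUnary.outdeg ⟨(a, 3), Or.inr hu⟩ = 1 := by
    have : (⟨(a, 3), Or.inr hu⟩ : G.ExpandedVertex) = G.exitVertex a :=
      Subtype.ext (Prod.ext rfl (G.gadgetExit_of_isUnary hu).symm)
    rw [this, outdeg_expandUnary_exitVertex, hu.2]
  simp only [x, G.indeg_expandUnary_of_ne_zero hu hi]
  fin_cases i
  · exact absurd rfl hi
  · rw [G.outdeg_expandUnary_of_ne_three hu (by decide)]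
    decide
  · rw [G.outdeg_expandUnary_of_ne_three hu (by decide)]
    decide
  · exact Or.inr ⟨by decide, hout3⟩

theorem IsPartialNetwork.reach_expandUnary (hG : IsPartialNetwork G root leaf)
    (x : G.ExpandedVertex) :
    ReflTransGen (fun a b => (a, b) ∈ G.expandUnary.edges) (G.baseVertex root) x := by
  refine Acyclic.reach_of_forall_exists_mem _ hG.acyclic.expandUnary (fun y hy => ?_) x
  obtain ⟨a, rfl⟩ | ⟨a, i, hu, hi, rfl⟩ := G.expandedVertex_cases y
  · obtain ⟨c, -, hc⟩ := (hG.reach a).cases_tail.resolve_left fun h => hy (h ▸ rfl)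
    exact ⟨G.exitVertex c, mem_ofRel.mpr (Or.inl ⟨hc, rfl, rfl⟩)⟩
  · exact ⟨⟨(a, i - 1), Or.inr hu⟩,
      mem_ofRel.mpr (Or.inr ⟨rfl, sub_one_mem_gadget i hi⟩)⟩

theorem IsPartialNetwork.leaf_iff_expandUnary (hG : IsPartialNetwork G root leaf)
    (hsink : ∀ v, G.outdeg v = 0 → ∃ x, leaf x = v) (y : G.ExpandedVertex) :
    (∃ x, G.baseVertex (leaf x) = y) ↔
      G.expandUnary.indeg y = 1 ∧ G.expandUnary.outdeg y = 0 := by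
  refine ⟨?_, fun ⟨_, hout⟩ => ?_⟩
  · rintro ⟨x, rfl⟩
    rw [indeg_expandUnary_baseVertex, outdeg_expandUnary_baseVertex_of_not_isUnary
      (hG.not_isUnary_leaf x)]
    exact ⟨hG.indeg_leaf x, hG.outdeg_leaf x⟩
  obtain ⟨a, rfl⟩ | ⟨a, i, hu, hi, rfl⟩ := G.expandedVertex_cases y
  · by_cases hu : G.IsUnary a
    · rw [outdeg_expandUnary_baseVertex_of_isUnary hu] at hout
      omega
    · rw [outdeg_expandUnary_baseVertex_of_not_isUnary hu] at hout
      exact (hsink a hout).imp fun x (hx : leaf x = a) => hx ▸ rfl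
  · rcases G.expandUnary_degrees_of_ne_zero hu hi with h | h <;> omega

theorem IsPartialNetwork.two_le_outdeg_expandUnary_root (hG : IsPartialNetwork G root leaf)
    (hsink : ∀ v, G.outdeg v = 0 → ∃ x, leaf x = v) :
    2 ≤ G.expandUnary.outdeg (G.baseVertex root) := by
  by_cases hu : G.IsUnary root
  · rw [outdeg_expandUnary_baseVertex_of_isUnary hu]
  · rw [outdeg_expandUnary_baseVertex_of_not_isUnary hu]
    have h0 : G.outdeg root ≠ 0 := fun h => (hsink root h).elim hG.leaf_ne_root
    have h1 : G.outdeg root ≠ 1 := fun h => hu ⟨hG.indeg_root.trans_le zero_le_one, h⟩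
    omega

theorem IsPartialNetwork.internal_expandUnary (hG : IsPartialNetwork G root leaf)
    (hsink : ∀ v, G.outdeg v = 0 → ∃ x, leaf x = v) (y : G.ExpandedVertex)
    (hy : y ≠ G.baseVertex root) (hnl : ¬∃ x, G.baseVertex (leaf x) = y) :
    (G.expandUnary.indeg y = 1 ∧ 2 ≤ G.expandUnary.outdeg y) ∨
      (2 ≤ G.expandUnary.indeg y ∧ G.expandUnary.outdeg y = 1) := by
  obtain ⟨a, rfl⟩ | ⟨a, i, hu, hi, rfl⟩ := G.expandedVertex_cases y
  · obtain ⟨c, -, hc⟩ := (hG.reach a).cases_tail.resolve_left fun h => hy (h ▸ rfl)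
    have hin := G.one_le_indeg_of_mem hc
    rw [indeg_expandUnary_baseVertex]
    by_cases hu : G.IsUnary a
    · rw [outdeg_expandUnary_baseVertex_of_isUnary hu]
      exact Or.inl ⟨le_antisymm hu.1 hin, le_rfl⟩
    · rw [outdeg_expandUnary_baseVertex_of_not_isUnary hu]
      have h0 : G.outdeg a ≠ 0 := fun h =>
        hnl ((hsink a h).imp fun x (hx : leaf x = a) => hx ▸ rfl)
      have h1 := hG.outdeg_le_one a
      have h2 : ¬(G.indeg a ≤ 1 ∧ G.outdeg a = 1) := hu
      omega
  · exact G.expandUnary_degrees_of_ne_zero hu hi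

theorem IsPartialNetwork.isPhyloNetwork_expandUnary (hG : IsPartialNetwork G root leaf)
    (hsink : ∀ v, G.outdeg v = 0 → ∃ x, leaf x = v) :
    IsPhyloNetwork G.expandUnary (G.baseVertex root) fun x => G.baseVertex (leaf x) where
  acyclic := hG.acyclic.expandUnary
  leaf_inj _ _ h := hG.leaf_inj (congrArg (·.1.1) h)
  reach := hG.reach_expandUnary
  leaf_iff := hG.leaf_iff_expandUnary hsink
  root_out := hG.two_le_outdeg_expandUnary_root hsink
  root_in := by rw [indeg_expandUnary_baseVertex, hG.indeg_root]
  internal := hG.internal_expandUnary hsink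

theorem IsPartialNetwork.exists_isPhyloNetwork_psHard_le [Nonempty X]
    (hG : IsPartialNetwork G root leaf) :
    ∃ (W : Type) (N : Digraph' W) (rootN : W) (leafN : X → W), IsPhyloNetwork N rootN leafN ∧
      ∀ (χ : X → C) (g : V → C), Extends leaf χ g → psHard N leafN χ ≤ ch G g := by
  set H := G.induce {u | G.ReachesLeaf leaf u}
  have hH : IsPhyloNetwork H.expandUnary _ _ :=
    hG.induce_reachesLeaf.isPhyloNetwork_expandUnary exists_eq_leaf_of_outdeg_induce_reachesLeaf
  refine ⟨_, _, _, _, hH, fun χ g hg => ?_⟩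
  calc psHard H.expandUnary _ χ ≤ ch H.expandUnary ((g ∘ Subtype.val) ∘ fun x => x.1.1) :=
        psHard_le_ch _ hg
    _ ≤ ch H (g ∘ Subtype.val) := H.ch_expandUnary_le _
    _ ≤ ch G g := G.ch_induce_le _ g

end ExpandNetwork

end Digraph'

/-- in a hardwired MP network, optimal extensions assign each
    reticulation the same state as all of its parents. -/
theorem stmt11 {V X C : Type} {k : ℕ} (S : Fin k → X → C)
    (N : Digraph' V) (rootN : V) (leafN : X → V) (hN : IsPhyloNetwork N rootN leafN)
    (hopt : ∀ (V' : Type) (N' : Digraph' V') (rootN' : V') (leafN' : X → V'),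
      IsPhyloNetwork N' rootN' leafN' → psHardSeq N leafN S ≤ psHardSeq N' leafN' S)
    (v : V) (hv : 2 ≤ N.indeg v)
    (f : Fin k → V → C) (hext : ∀ i, Extends leafN (S i) (f i))
    (hreal : ∑ i, ch N (f i) = psHardSeq N leafN S) :
    ∀ (i : Fin k) (p : V), (p, v) ∈ N.edges → f i p = f i v := by
  intro i p hpv
  by_contra hne
  have := N.finite_of_reach hN.reach
  have := Fintype.ofFinite V
  have := hN.nonempty_taxa
  obtain ⟨W, N', root', leaf', hN', hcost⟩ :=
    (hN.isPartialNetwork.erase (p := p) hv).exists_isPhyloNetwork_psHard_le (C := C)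
  have hlt : psHardSeq N' leaf' S < psHardSeq N leafN S := by
    rw [← hreal]
    exact Finset.sum_lt_sum (fun j _ => (hcost _ _ (hext j)).trans (N.ch_erase_le _ _))
      ⟨i, Finset.mem_univ _, (hcost _ _ (hext i)).trans_lt (N.ch_erase_lt hpv hne)⟩
  exact (hopt W N' root' leaf' hN').not_gt hlt
end
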